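/- arXiv:1308.3417 — 4 statements merged into one kernel-verified Lean document; each statement's English description precedes it below -/
import Mathlib

section
/- The principal congruence subgroup Γ(2) of SL(2,ℤ) equals the subgroup of SL(2,ℤ) generated by the three matrices T² = [[1,2],[0,1]], S·T²·S = [[-1,0],[2,-1]], and -I. -/
/-! Left multiplication by `T ^ (2k)` adds `2k c` to `a` in the first column `(a, c)`, and
multiplication by `S T ^ (2k) S⁻¹ = [[1, 0], [-2k, 1]]` subtracts `2k a` from `c`; both lie in the
closure, since `S T² S⁻¹ = -(S T² S)`. For `A ∈ Γ(2)`, `a` is odd and `c` even, so `|a| ≠ |c|`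
and one of these steps makes the larger entry at most the smaller one in absolute value.
This Euclidean descent on `|a| + |c|` ends at `c = 0`, where `A = ±T ^ b` with `b` even. -/

open Matrix MatrixGroups CongruenceSubgroup

lemma Int.exists_natAbs_add_two_mul_mul_le (x : ℤ) {y : ℤ} (hy : y ≠ 0) :
    ∃ k : ℤ, (x + 2 * k * y).natAbs ≤ y.natAbs := by
  obtain ⟨k, hk⟩ : 2 * y ∣ x - x.bmod (2 * y).natAbs := by
    rw [← Int.natAbs_dvd]
    exact Int.ModEq.dvd (Int.bmod_emod (x := x) (m := (2 * y).natAbs))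
  have hlo := Int.le_bmod (x := x) (m := (2 * y).natAbs) (by omega)
  have hhi := Int.bmod_lt (x := x) (m := (2 * y).natAbs) (by omega)
  exact ⟨-k, by rw [show x + 2 * -k * y = x.bmod (2 * y).natAbs by linarith]; omega⟩

namespace ModularGroup

open Matrix.SpecialLinearGroup

lemma T_zpow_mul_apply_zero_zero (n : ℤ) (A : SL(2, ℤ)) :
    (T ^ n * A) 0 0 = A 0 0 + n * A 1 0 := by
  simp [coe_T_zpow, Matrix.mul_apply, Fin.sum_univ_two]

lemma S_mul_T_zpow_mul_S_inv_mul_apply (n : ℤ) (A : SL(2, ℤ)) :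
    (S * T ^ n * S⁻¹ * A) 0 0 = A 0 0 ∧ (S * T ^ n * S⁻¹ * A) 1 0 = A 1 0 - n * A 0 0 := by
  simp [coe_T_zpow, S_inv, Matrix.vecMul, dotProduct, Fin.sum_univ_two]
  ring

lemma odd_apply_zero_zero_even_apply_one_zero_of_mem_Gamma_two {A : SL(2, ℤ)} (hA : A ∈ Γ(2)) :
    Odd (A 0 0) ∧ Even (A 1 0) := by
  obtain ⟨ha, -, hc, -⟩ := Gamma_mem.mp hA
  exact ⟨ZMod.intCast_eq_one_iff_odd.mp ha, ZMod.intCast_eq_zero_iff_even.mp hc⟩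

abbrev gammaTwoGenerators : Set SL(2, ℤ) := {T ^ 2, S * T ^ 2 * S, -1}

lemma closure_gammaTwoGenerators_le_Gamma_two : Subgroup.closure gammaTwoGenerators ≤ Γ(2) := by
  rw [Subgroup.closure_le, Set.insert_subset_iff, Set.insert_subset_iff, Set.singleton_subset_iff]
  simp only [SetLike.mem_coe, Gamma_mem]
  decide

lemma T_zpow_two_mul_mem_closure (n : ℤ) : T ^ (2 * n) ∈ Subgroup.closure gammaTwoGenerators := by
  rw [_root_.zpow_mul, zpow_ofNat]
  exact zpow_mem (Subgroup.subset_closure (by simp)) n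

lemma S_mul_T_zpow_two_mul_mul_S_inv_mem_closure (n : ℤ) :
    S * T ^ (2 * n) * S⁻¹ ∈ Subgroup.closure gammaTwoGenerators := by
  have hgen : S * T ^ 2 * S⁻¹ = (S * T ^ 2 * S) * -1 := by rw [S_inv, mul_neg, mul_neg_one]
  rw [_root_.zpow_mul, zpow_ofNat, ← conj_zpow]
  refine zpow_mem ?_ n
  rw [hgen]
  exact mul_mem (Subgroup.subset_closure (by simp)) (Subgroup.subset_closure (by simp))

lemma mem_closure_of_mem_Gamma_two_of_apply_one_zero_eq_zero {A : SL(2, ℤ)} (hA : A ∈ Γ(2))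
    (hc : A 1 0 = 0) : A ∈ Subgroup.closure gammaTwoGenerators := by
  have had : A 0 0 * A 1 1 = 1 := by
    have := A.det_coe
    rw [det_fin_two, hc] at this
    linarith
  obtain ⟨m, hm⟩ : Even (A 0 1) := ZMod.intCast_eq_zero_iff_even.mp (Gamma_mem.mp hA).2.1
  rcases Int.eq_one_or_neg_one_of_mul_eq_one' had with ⟨ha, hd⟩ | ⟨ha, hd⟩
  · convert T_zpow_two_mul_mem_closure m
    ext i j
    fin_cases i <;> fin_cases j <;> simp [ha, hc, hd, hm, coe_T_zpow, two_mul]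
  · convert mul_mem (Subgroup.subset_closure (by simp) : (-1 : SL(2, ℤ)) ∈ _)
      (T_zpow_two_mul_mem_closure (-m))
    ext i j
    fin_cases i <;> fin_cases j <;> simp [ha, hc, hd, hm, coe_T_zpow, two_mul]

lemma exists_mem_closure_natAbs_lt_of_mem_Gamma_two {A : SL(2, ℤ)} (hA : A ∈ Γ(2))
    (hc : A 1 0 ≠ 0) : ∃ g ∈ Subgroup.closure gammaTwoGenerators,
      ((g * A) 0 0).natAbs + ((g * A) 1 0).natAbs < (A 0 0).natAbs + (A 1 0).natAbs := by
  obtain ⟨⟨r, hr⟩, ⟨s, hs⟩⟩ := odd_apply_zero_zero_even_apply_one_zero_of_mem_Gamma_two hA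
  rcases lt_or_gt_of_ne (show (A 1 0).natAbs ≠ (A 0 0).natAbs by omega) with hca | hac
  · obtain ⟨k, hk⟩ := Int.exists_natAbs_add_two_mul_mul_le (A 0 0) hc
    refine ⟨T ^ (2 * k), T_zpow_two_mul_mem_closure k, ?_⟩
    rw [T_zpow_mul_apply_zero_zero, show (T ^ (2 * k) * A) 1 0 = A 1 0 from
      congrFun (T_pow_mul_apply_one _ A) 0]
    omega
  · obtain ⟨k, hk⟩ := Int.exists_natAbs_add_two_mul_mul_le (A 1 0) (show A 0 0 ≠ 0 by omega)
    refine ⟨S * T ^ (2 * -k) * S⁻¹, S_mul_T_zpow_two_mul_mul_S_inv_mem_closure (-k), ?_⟩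
    obtain ⟨h00, h10⟩ := S_mul_T_zpow_mul_S_inv_mul_apply (2 * -k) A
    rw [h00, h10, show A 1 0 - 2 * -k * A 0 0 = A 1 0 + 2 * k * A 0 0 by ring]
    omega

lemma Gamma_two_le_closure_gammaTwoGenerators : Γ(2) ≤ Subgroup.closure gammaTwoGenerators := by
  intro A hA
  induction hn : (A 0 0).natAbs + (A 1 0).natAbs using Nat.strong_induction_on generalizing A
    with | _ n ih =>
  by_cases hc : A 1 0 = 0
  · exact mem_closure_of_mem_Gamma_two_of_apply_one_zero_eq_zero hA hc
  obtain ⟨g, hg, hlt⟩ := exists_mem_closure_natAbs_lt_of_mem_Gamma_two hA hc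
  have hgA := ih _ (hn ▸ hlt) (mul_mem (closure_gammaTwoGenerators_le_Gamma_two hg) hA) rfl
  exact (Subgroup.mul_mem_cancel_left _ hg).mp hgA

end ModularGroup

/-- The principal congruence subgroup `Γ(2)` of `SL(2,ℤ)` is generated by
`T² = [[1,2],[0,1]]`, `S·T²·S = [[-1,0],[2,-1]]` and `-I`. -/
theorem Gamma_two_eq_closure :
    Gamma 2 = Subgroup.closure
      ({ModularGroup.T ^ 2, ModularGroup.S * ModularGroup.T ^ 2 * ModularGroup.S, -1} :
        Set SL(2, ℤ)) :=
  le_antisymm ModularGroup.Gamma_two_le_closure_gammaTwoGenerators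
    ModularGroup.closure_gammaTwoGenerators_le_Gamma_two
end

section
/- Let k be an even positive integer, let χ : SL(2,ℤ) → ℂˣ be the unique group homomorphism with χ(S) = χ(T) = -1, let f : ℍ → ℂ be any function, and define g : ℍ → ℂ by g(τ) = f(2τ). Then f∣[k]γ = χ(γ)·f for all γ ∈ SL(2,ℤ) if and only if the following three conditions hold: g∣[k]γ = g for all γ ∈ Γ₀(4), g∣[k]W₄ = -g, and g∣[k]T_{1/2} = -g. -/
/-!
Conjugation by `doubling = diag(2, 1)` turns `f` into a constant multiple of `g` and intertwines `S`
with `W₄` (up to the scalar `2`, which acts trivially), `T` with `T_{1/2}`, and `Γ₀(4)` with a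
subgroup of `Γ(2)`. Since `χ` agrees with the sign character of `SL(2, ZMod 2) ≅ S₃` on the
generators `S`, `T`, it is trivial on `Γ(2)`; and since `S`, `T` generate `SL(2, ℤ)`, the
transformation law of `f` follows from those of `g` under `W₄` and `T_{1/2}`.
-/

open UpperHalfPlane Matrix MatrixGroups CongruenceSubgroup

noncomputable section

/-- An element of `GL(2,ℝ)⁺` built from a 2×2 real matrix of positive determinant. -/
def mkGLPos (M : Matrix (Fin 2) (Fin 2) ℝ) (h : 0 < M.det) : GL(2, ℝ)⁺ :=
  ⟨Matrix.GeneralLinearGroup.mkOfDetNeZero M h.ne', by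
    simpa [Matrix.mem_glpos, Matrix.GeneralLinearGroup.val_det_apply,
      Matrix.GeneralLinearGroup.mkOfDetNeZero] using h⟩

set_option synthInstance.maxHeartbeats 400000 in
/-- The weight-`k` slash operator with the classical normalization
`(f ∣[k] A)(τ) = det(A)^(k/2) · (cτ+d)^(-k) · f(Aτ)`. -/
def wtSlash (k : ℤ) (A : GL(2, ℝ)⁺) (f : ℍ → ℂ) : ℍ → ℂ := fun τ =>
  ((((A : GL (Fin 2) ℝ) : Matrix (Fin 2) (Fin 2) ℝ).det ^ ((k : ℝ) / 2) : ℝ) : ℂ) *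
    (UpperHalfPlane.denom A τ) ^ (-k) * f (A • τ)

/-- The image of an integral special linear matrix in `GL(2,ℝ)⁺`. -/
def toGL (γ : SL(2, ℤ)) : GL(2, ℝ)⁺ :=
  Matrix.SpecialLinearGroup.toGLPos (γ.map (Int.castRingHom ℝ))

/-- `W₄ = [[0,-1],[4,0]]` as an element of `GL(2,ℝ)⁺`. -/
def W4 : GL(2, ℝ)⁺ := mkGLPos !![0, -1; 4, 0] (by norm_num [Matrix.det_fin_two_of])

/-- `T_{1/2} = [[1,1/2],[0,1]]` as an element of `GL(2,ℝ)⁺`. -/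
def Thalf : GL(2, ℝ)⁺ := mkGLPos !![1, 1/2; 0, 1] (by norm_num [Matrix.det_fin_two_of])

/-- The map `τ ↦ 2τ` on the upper half-plane. -/
def double (τ : ℍ) : ℍ := ⟨2 * (τ : ℂ), by simpa [Complex.mul_im] using τ.2⟩

open ModularGroup

def doubling : GL(2, ℝ)⁺ := mkGLPos !![2, 0; 0, 1] (by norm_num [Matrix.det_fin_two_of])

def scalarTwo : GL(2, ℝ)⁺ := mkGLPos !![2, 0; 0, 2] (by norm_num [Matrix.det_fin_two_of])

lemma coe_mkGLPos (M : Matrix (Fin 2) (Fin 2) ℝ) (h : 0 < M.det) :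
    ((mkGLPos M h : GL (Fin 2) ℝ) : Matrix (Fin 2) (Fin 2) ℝ) = M := rfl

lemma coe_toGL (γ : SL(2, ℤ)) :
    ((toGL γ : GL (Fin 2) ℝ) : Matrix (Fin 2) (Fin 2) ℝ) = (γ : Matrix (Fin 2) (Fin 2) ℤ).map (↑) :=
  rfl

lemma toGL_mul (γ δ : SL(2, ℤ)) : toGL (γ * δ) = toGL γ * toGL δ := by
  simp only [toGL, map_mul]

lemma toGL_one : toGL 1 = 1 := by
  simp only [toGL, map_one]

lemma doubling_mul_W4 : doubling * W4 = toGL S * doubling * scalarTwo := by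
  refine Subtype.ext <| Matrix.GeneralLinearGroup.ext fun i j => ?_
  fin_cases i <;> fin_cases j <;>
    norm_num [doubling, W4, scalarTwo, coe_mkGLPos, coe_toGL, Matrix.mul_apply, Fin.sum_univ_succ]

lemma doubling_mul_Thalf : doubling * Thalf = toGL T * doubling := by
  refine Subtype.ext <| Matrix.GeneralLinearGroup.ext fun i j => ?_
  fin_cases i <;> fin_cases j <;>
    norm_num [doubling, Thalf, coe_mkGLPos, coe_toGL, Matrix.mul_apply, Fin.sum_univ_succ]

/-- `γ' = [[a, 2b], [2m, d]]` for `γ = [[a, b], [4m, d]]`; `ad ≡ 1 (mod 2)` forces `a`, `d` odd. -/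
lemma exists_mem_Gamma_two_doubling_mul {γ : SL(2, ℤ)} (hγ : γ ∈ Gamma0 4) :
    ∃ γ' ∈ Gamma 2, doubling * toGL γ = toGL γ' * doubling := by
  obtain ⟨m, hm⟩ := (ZMod.intCast_zmod_eq_zero_iff_dvd _ 4).mp (Gamma0_mem.mp hγ)
  have hdet : γ 0 0 * γ 1 1 - γ 0 1 * γ 1 0 = 1 := by rw [← Matrix.det_fin_two]; exact γ.2
  obtain ⟨γ', hγ'⟩ : ∃ γ' : SL(2, ℤ),
      (γ' : Matrix (Fin 2) (Fin 2) ℤ) = !![γ 0 0, 2 * γ 0 1; 2 * m, γ 1 1] :=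
    ⟨⟨_, by rw [Matrix.det_fin_two_of]; linear_combination hdet + γ 0 1 * hm⟩, rfl⟩
  refine ⟨γ', ?_, ?_⟩
  · have hdiag : (γ 0 0 : ZMod 2) * γ 1 1 = 1 := by
      have := congrArg (Int.cast : ℤ → ZMod 2)
        (show γ 0 0 * γ 1 1 = 1 + 2 * (2 * γ 0 1 * m) by linear_combination hdet + γ 0 1 * hm)
      push_cast at this
      rw [this, show (2 : ZMod 2) = 0 from rfl, zero_mul, add_zero]
    have hodd : ∀ x y : ZMod 2, x * y = 1 → x = 1 ∧ y = 1 := by decide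
    simp [Gamma_mem, hγ', hodd _ _ hdiag, show (2 : ZMod 2) = 0 from rfl]
  · refine Subtype.ext <| Matrix.GeneralLinearGroup.ext fun i j => ?_
    fin_cases i <;> fin_cases j <;>
      simp [doubling, coe_mkGLPos, coe_toGL, hγ', Matrix.mul_apply, Fin.sum_univ_succ, hm] <;> ring

section Slash

variable (k : ℤ)

lemma wtSlash_mul (A B : GL(2, ℝ)⁺) (f : ℍ → ℂ) :
    wtSlash k (A * B) f = wtSlash k B (wtSlash k A f) := by
  funext τ
  have hA : 0 < ((A : GL (Fin 2) ℝ) : Matrix (Fin 2) (Fin 2) ℝ).det := A.2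
  have hB : 0 < ((B : GL (Fin 2) ℝ) : Matrix (Fin 2) (Fin 2) ℝ).det := B.2
  have hdenom : denom ((A : GL (Fin 2) ℝ) * B) τ = denom A (B • τ : ℍ) * denom B τ := by
    rw [Subgroup.smul_def, coe_smul_of_det_pos hB]
    exact denom_cocycle _ _ τ.im_ne_zero
  simp only [wtSlash, mul_smul, Subgroup.coe_mul, Units.val_mul, Matrix.det_mul,
    Real.mul_rpow hA.le hB.le, hdenom, mul_zpow]
  push_cast
  ring

lemma wtSlash_one (f : ℍ → ℂ) : wtSlash k 1 f = f := by
  funext τ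
  simp [wtSlash, denom_one]

lemma wtSlash_smul (A : GL(2, ℝ)⁺) (c : ℂ) (f : ℍ → ℂ) :
    wtSlash k A (c • f) = c • wtSlash k A f := by
  funext τ
  simp only [wtSlash, Pi.smul_apply, smul_eq_mul]
  ring

lemma wtSlash_injective (A : GL(2, ℝ)⁺) : Function.Injective (wtSlash k A) := by
  intro f f' h
  rw [← wtSlash_one k f, ← wtSlash_one k f', ← mul_inv_cancel A, wtSlash_mul, wtSlash_mul, h]

lemma doubling_smul (τ : ℍ) : doubling • τ = double τ := by
  ext
  rw [Subgroup.smul_def, coe_smul_of_det_pos doubling.2]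
  simp [num, denom, doubling, coe_mkGLPos, double]

lemma wtSlash_doubling (f : ℍ → ℂ) :
    wtSlash k doubling f = (((2 : ℝ) ^ ((k : ℝ) / 2) : ℝ) : ℂ) • fun τ => f (double τ) := by
  funext τ
  have hdenom : denom doubling τ = 1 := by simp [denom, doubling, coe_mkGLPos]
  have hdet : ((doubling : GL (Fin 2) ℝ) : Matrix (Fin 2) (Fin 2) ℝ).det = 2 := by
    simp [doubling, coe_mkGLPos, Matrix.det_fin_two_of]
  simp [wtSlash, doubling_smul, hdenom, hdet]

lemma wtSlash_scalarTwo (f : ℍ → ℂ) : wtSlash k scalarTwo f = f := by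
  funext τ
  have hnum : num scalarTwo τ = 2 * τ := by simp [num, scalarTwo, coe_mkGLPos]
  have hdenom : denom scalarTwo τ = 2 := by simp [denom, scalarTwo, coe_mkGLPos]
  have hsmul : scalarTwo • τ = τ := by
    ext
    rw [Subgroup.smul_def, coe_smul_of_det_pos scalarTwo.2, hnum, hdenom,
      mul_div_cancel_left₀ _ two_ne_zero]
  have hdet : ((scalarTwo : GL (Fin 2) ℝ) : Matrix (Fin 2) (Fin 2) ℝ).det = 2 ^ (2 : ℝ) := by
    norm_num [scalarTwo, coe_mkGLPos, Matrix.det_fin_two_of]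
  rw [wtSlash, hsmul, hdenom, hdet, ← Real.rpow_mul zero_le_two,
    mul_div_cancel₀ _ two_ne_zero, Real.rpow_intCast]
  push_cast
  rw [← zpow_add₀ two_ne_zero, add_neg_cancel, zpow_zero, one_mul]

lemma wtSlash_doubling_mul_W4 : wtSlash k (doubling * W4) = wtSlash k (toGL S * doubling) := by
  funext f
  rw [doubling_mul_W4, wtSlash_mul _ _ scalarTwo, wtSlash_scalarTwo]

/-- `g` is `f ∣[k] doubling` up to the nonzero constant `2 ^ (k / 2)`. -/
lemma wtSlash_eq_smul_iff_of_intertwine {A B : GL(2, ℝ)⁺}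
    (h : wtSlash k (doubling * A) = wtSlash k (B * doubling)) (a : ℂ) {f g : ℍ → ℂ}
    (hg : ∀ τ, g τ = f (double τ)) :
    wtSlash k B f = a • f ↔ wtSlash k A g = a • g := by
  obtain rfl : g = fun τ => f (double τ) := funext hg
  set c : ℂ := (((2 : ℝ) ^ ((k : ℝ) / 2) : ℝ) : ℂ)
  have hc : c ≠ 0 := Complex.ofReal_ne_zero.mpr (Real.rpow_pos_of_pos two_pos _).ne'
  rw [← (wtSlash_injective k doubling).eq_iff, ← wtSlash_mul, ← h, wtSlash_mul, wtSlash_smul,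
    wtSlash_doubling, wtSlash_smul, smul_comm a c, (smul_right_injective _ hc).eq_iff]

end Slash

/-- `SL(2, ZMod 2) ≅ S₃`, whose even permutations are the elements of order dividing `3`. -/
def sl2ZModTwoSign : SL(2, ZMod 2) →* ℤˣ where
  toFun A := if A ^ 3 = 1 then 1 else -1
  map_one' := by decide
  map_mul' := by decide

/-- `χ` agrees with the sign of `SL(2, ZMod 2)` on the generators `S`, `T`, so it factors
through reduction mod `2`. -/
lemma MonoidHom.eq_one_of_mem_Gamma_two {χ : SL(2, ℤ) →* ℂˣ} (hS : (χ S : ℂ) = -1)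
    (hT : (χ T : ℂ) = -1) {γ : SL(2, ℤ)} (hγ : γ ∈ Gamma 2) : χ γ = 1 := by
  let red : SL(2, ℤ) →* SL(2, ZMod 2) :=
    Matrix.SpecialLinearGroup.map (Int.castRingHom (ZMod 2))
  have hS₂ : sl2ZModTwoSign (red S) = -1 := by decide
  have hT₂ : sl2ZModTwoSign (red T) = -1 := by decide
  have hχ : χ = (Units.map (Int.castRingHom ℂ : ℤ →* ℂ)).comp (sl2ZModTwoSign.comp red) := by
    refine MonoidHom.eq_of_eqOn_dense SpecialLinearGroup.SL2Z_generators ?_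
    rintro _ (rfl | rfl) <;> ext <;> simp [hS, hT, hS₂, hT₂]
  rw [hχ, MonoidHom.comp_apply, MonoidHom.comp_apply, Gamma_mem'.1 hγ, map_one, map_one]

def slashCharSubgroup (k : ℤ) (χ : SL(2, ℤ) →* ℂˣ) (f : ℍ → ℂ) : Subgroup SL(2, ℤ) where
  carrier := {γ | wtSlash k (toGL γ) f = (χ γ : ℂ) • f}
  one_mem' := by simp [toGL_one, wtSlash_one]
  mul_mem' {γ δ} hγ hδ := by
    simp only [Set.mem_ofPred_eq, toGL_mul, wtSlash_mul, map_mul, Units.val_mul, mul_smul] at *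
    rw [hγ, wtSlash_smul, hδ, smul_comm]
  inv_mem' {γ} hγ := by
    have h : wtSlash k (toGL γ⁻¹) ((χ γ : ℂ) • f) = f := by
      rw [← hγ, ← wtSlash_mul, ← toGL_mul, mul_inv_cancel, toGL_one, wtSlash_one]
    rw [wtSlash_smul] at h
    rw [Set.mem_ofPred_eq, map_inv, Units.val_inv_eq_inv_val, eq_inv_smul_iff₀ (χ γ).ne_zero, h]

lemma slashCharSubgroup_eq_top {k : ℤ} {χ : SL(2, ℤ) →* ℂˣ} {f : ℍ → ℂ}
    (hS : wtSlash k (toGL S) f = (χ S : ℂ) • f) (hT : wtSlash k (toGL T) f = (χ T : ℂ) • f) :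
    slashCharSubgroup k χ f = ⊤ := by
  rw [eq_top_iff, ← SpecialLinearGroup.SL2Z_generators, Subgroup.closure_le]
  rintro _ (rfl | rfl)
  exacts [hS, hT]

theorem slash_char_iff_Gamma0_four_general (k : ℤ)
    (χ : SL(2, ℤ) →* ℂˣ) (hS : (χ ModularGroup.S : ℂ) = -1) (hT : (χ ModularGroup.T : ℂ) = -1)
    (f : ℍ → ℂ) (g : ℍ → ℂ) (hg : ∀ τ : ℍ, g τ = f (double τ)) :
    (∀ γ : SL(2, ℤ), wtSlash k (toGL γ) f = (χ γ : ℂ) • f) ↔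
      ((∀ γ : SL(2, ℤ), γ ∈ Gamma0 4 → wtSlash k (toGL γ) g = g) ∧
        wtSlash k W4 g = -g ∧ wtSlash k Thalf g = -g) := by
  have hW4 : wtSlash k (toGL S) f = (χ S : ℂ) • f ↔ wtSlash k W4 g = -g := by
    rw [wtSlash_eq_smul_iff_of_intertwine k (wtSlash_doubling_mul_W4 k) _ hg, hS, neg_one_smul]
  have hThalf : wtSlash k (toGL T) f = (χ T : ℂ) • f ↔ wtSlash k Thalf g = -g := by
    rw [wtSlash_eq_smul_iff_of_intertwine k (congrArg _ doubling_mul_Thalf) _ hg, hT,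
      neg_one_smul]
  constructor
  · intro hf
    refine ⟨fun γ hγ => ?_, hW4.1 (hf S), hThalf.1 (hf T)⟩
    obtain ⟨γ', hγ', hconj⟩ := exists_mem_Gamma_two_doubling_mul hγ
    have hγ'f : wtSlash k (toGL γ') f = (1 : ℂ) • f := by
      rw [hf, χ.eq_one_of_mem_Gamma_two hS hT hγ', Units.val_one]
    simpa using (wtSlash_eq_smul_iff_of_intertwine k (congrArg _ hconj) 1 hg).1 hγ'f
  · rintro ⟨-, hW, hTh⟩
    exact (Subgroup.eq_top_iff' _).1 (slashCharSubgroup_eq_top (hW4.2 hW) (hThalf.2 hTh))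

/-- for `k` even positive, `χ` the character with `χ(S) = χ(T) = -1`,
`f : ℍ → ℂ` any function and `g(τ) = f(2τ)`: `f∣[k]γ = χ(γ)·f` for all `γ ∈ SL(2,ℤ)` iff
`g` is slash-invariant under `Γ₀(4)` and satisfies `g∣[k]W₄ = -g` and `g∣[k]T_{1/2} = -g`. -/
theorem slash_char_iff_Gamma0_four (k : ℤ) (hk : 0 < k) (hke : Even k)
    (χ : SL(2, ℤ) →* ℂˣ) (hS : (χ ModularGroup.S : ℂ) = -1) (hT : (χ ModularGroup.T : ℂ) = -1)
    (f : ℍ → ℂ) (g : ℍ → ℂ) (hg : ∀ τ : ℍ, g τ = f (double τ)) :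
    (∀ γ : SL(2, ℤ), wtSlash k (toGL γ) f = (χ γ : ℂ) • f) ↔
      ((∀ γ : SL(2, ℤ), γ ∈ Gamma0 4 → wtSlash k (toGL γ) g = g) ∧
        wtSlash k W4 g = -g ∧ wtSlash k Thalf g = -g) :=
  slash_char_iff_Gamma0_four_general k χ hS hT f g hg
end
end

section
/- Let k be an even integer, let ε ∈ {1, -1}, and let f : ℍ → ℂ be a function satisfying f∣[k]S = ε·f and f∣[k]T = -ε·f. Then f is identically zero. -/
/-! Since `ε² = 1`, the hypotheses give `f ∣[k] (S T) = ε • (-(ε • f)) = -f`, hence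
`f ∣[k] (S T)³ = -f`. But `(S T)³ = -I` acts trivially in even weight, so `f = -f`. -/

open UpperHalfPlane Matrix MatrixGroups CongruenceSubgroup

noncomputable section

open ModularForm

theorem SlashAction.slash_pow_of_odd_of_slash_eq_neg {β G α : Type*} [Monoid G] [AddGroup α]
    [SlashAction β G α] {k : β} {g : G} {a : α} (h : a ∣[k] g = -a) {n : ℕ} (hn : Odd n) :
    a ∣[k] (g ^ n) = -a := by
  obtain ⟨m, rfl⟩ := hn
  induction m with
  | zero => simpa using h
  | succ m ih =>
    rw [show 2 * (m + 1) + 1 = (2 * m + 1) + 2 by ring, pow_add, sq]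
    simp [SlashAction.slash_mul, ih, h]

theorem wtSlash_toGL (k : ℤ) (γ : SL(2, ℤ)) (f : ℍ → ℂ) :
    wtSlash k (toGL γ) f = f ∣[k] γ := by
  funext τ
  have hdet : (((toGL γ : GL(2, ℝ)⁺) : GL (Fin 2) ℝ) : Matrix (Fin 2) (Fin 2) ℝ).det = 1 :=
    (γ.map (Int.castRingHom ℝ)).2
  rw [SL_slash_apply, wtSlash, hdet, Real.one_rpow, Complex.ofReal_one, one_mul, mul_comm]
  rfl

theorem slash_neg_one_of_even {k : ℤ} (hk : Even k) (f : ℍ → ℂ) :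
    f ∣[k] (-1 : SL(2, ℤ)) = f := by
  funext τ
  have hsmul : (-1 : SL(2, ℤ)) • τ = τ := by rw [ModularGroup.SL_neg_smul, one_smul]
  have hdenom : denom (-1 : SL(2, ℤ)) τ = -1 := by simp [denom]
  rw [SL_slash_apply, hsmul, hdenom, hk.neg.neg_one_zpow, mul_one]

theorem ModularGroup.S_mul_T_pow_three : (S * T) ^ 3 = (-1 : SL(2, ℤ)) := by
  ext i j
  fin_cases i <;> fin_cases j <;>
    simp [coe_S, coe_T, pow_succ, Matrix.mul_apply, Fin.sum_univ_succ]

/-- if `k` is even, `ε ∈ {1,-1}`, and `f : ℍ → ℂ` satisfies `f∣[k]S = ε·f`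
and `f∣[k]T = -ε·f`, then `f = 0`. -/
theorem eq_zero_of_slash_S_T_opposite_signs (k : ℤ) (hke : Even k) (ε : ℂ)
    (hε : ε = 1 ∨ ε = -1) (f : ℍ → ℂ)
    (hS : wtSlash k (toGL ModularGroup.S) f = ε • f)
    (hT : wtSlash k (toGL ModularGroup.T) f = -(ε • f)) :
    f = 0 := by
  rw [wtSlash_toGL] at hS hT
  have hεε : ε * ε = 1 := by rcases hε with rfl | rfl <;> norm_num
  have hST : f ∣[k] (ModularGroup.S * ModularGroup.T) = -f := by
    rw [SlashAction.slash_mul, hS, SL_smul_slash, hT, smul_neg, smul_smul, hεε, one_smul]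
  have hneg : f = -f := calc
    f = f ∣[k] ((ModularGroup.S * ModularGroup.T) ^ 3) := by
      rw [ModularGroup.S_mul_T_pow_three, slash_neg_one_of_even hke]
    _ = -f := SlashAction.slash_pow_of_odd_of_slash_eq_neg hST (by decide)
  exact self_eq_neg.mp hneg

end
end

section
/- Let k be an even positive integer and let g be a cusp form of weight k for Γ₀(4) satisfying g∣[k]W₄ = -g. Then for every s ∈ ℂ the function y ↦ g(iy)·y^{s-1} is integrable on (0,∞), and the completed L-function Λ(s) := 2^s ∫₀^∞ g(iy) y^{s-1} dy satisfies the functional equation Λ(s) = -i^k Λ(k-s) for all s ∈ ℂ. -/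
open UpperHalfPlane Matrix MatrixGroups CongruenceSubgroup

noncomputable section

/-- The value `g(iy)` of a function on the upper half-plane, extended by `0` for `y ≤ 0`. -/
def valI (g : ℍ → ℂ) (y : ℝ) : ℂ :=
  if hy : 0 < y then g ⟨Complex.I * y, by simpa using hy⟩ else 0

/-- The completed L-function `Λ(s) = 2^s ∫₀^∞ g(iy) y^{s-1} dy` of `g`. -/
def completedL (g : ℍ → ℂ) (s : ℂ) : ℂ :=
  (2 : ℂ) ^ s * ∫ y in Set.Ioi (0 : ℝ), valI g y * (y : ℂ) ^ (s - 1)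

/-! On the imaginary axis `W₄` acts by `y ↦ 1/(4y)`, so `φ(t) = g(it/2)` satisfies
`φ(1/t) = -iᵏ tᵏ φ(t)`. Together with the exponential decay of the cusp form `g` at `i∞`, this
makes `(φ, φ)` a strong FE-pair (`WeakFEPair`, `IsStrongFEPair`) with root number `-iᵏ`. Its
Mellin integral therefore converges for every `s`, equals `Λ(s)`, and satisfies the abstract
functional equation of FE-pairs. -/

open Filter Asymptotics

lemma coe_W4 : ((W4 : GL (Fin 2) ℝ) : Matrix (Fin 2) (Fin 2) ℝ) = !![0, -1; 4, 0] := rfl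

lemma det_W4 : ((W4 : GL (Fin 2) ℝ) : Matrix (Fin 2) (Fin 2) ℝ).det = 4 := by
  norm_num [coe_W4, Matrix.det_fin_two_of]

lemma denom_W4 (τ : ℍ) : denom W4 τ = 4 * τ := by
  simp [denom, coe_W4]

lemma coe_W4_smul (τ : ℍ) : ((W4 • τ : ℍ) : ℂ) = -1 / (4 * τ) := by
  rw [show ((W4 • τ : ℍ) : ℂ) = (((W4 : GL (Fin 2) ℝ) • τ : ℍ) : ℂ) from rfl,
    coe_smul_of_det_pos (by simp [Matrix.GeneralLinearGroup.val_det_apply, det_W4]), denom_W4]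
  simp [num, coe_W4]

lemma apply_W4_smul {k : ℤ} {f : ℍ → ℂ} (hW : wtSlash k W4 f = -f) (τ : ℍ) :
    f (W4 • τ) = -(2 * τ) ^ k * f τ := by
  have h := congrFun hW τ
  have hdet : ((4 : ℝ) ^ ((k : ℝ) / 2) : ℝ) = (2 : ℂ) ^ k := by
    rw [show (4 : ℝ) = 2 ^ (2 : ℝ) by norm_num, ← Real.rpow_mul (by norm_num),
      mul_div_cancel₀ _ two_ne_zero, Real.rpow_intCast]
    push_cast; rfl
  have h2τ : (2 * (τ : ℂ)) ^ k ≠ 0 := zpow_ne_zero _ (mul_ne_zero two_ne_zero τ.ne_zero)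
  rw [wtSlash, det_W4, hdet, denom_W4, show (4 : ℂ) * τ = 2 * (2 * τ) by ring, mul_zpow,
    _root_.zpow_neg, _root_.zpow_neg, Pi.neg_apply] at h
  field_simp at h
  linear_combination h

lemma valI_of_pos (f : ℍ → ℂ) {y : ℝ} (hy : 0 < y) :
    valI f y = f ⟨Complex.I * y, by simpa using hy⟩ :=
  dif_pos hy

/-- `t ↦ g(it/2)`. The rescaling turns `W₄ : τ ↦ -1/(4τ)` into `t ↦ 1/t` on the imaginary axis
and absorbs the factor `2^s` of `completedL`. -/
def valIHalf (f : ℍ → ℂ) (t : ℝ) : ℂ := valI f (t / 2)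

lemma valIHalf_one_div {k : ℤ} {f : ℍ → ℂ} (hW : wtSlash k W4 f = -f) {x : ℝ} (hx : 0 < x) :
    valIHalf f (1 / x) = (-(Complex.I ^ k) * ((x ^ (k : ℝ) : ℝ) : ℂ)) • valIHalf f x := by
  set τ : ℍ := ⟨Complex.I * (x / 2 : ℝ), by simpa using hx⟩
  have hx0 : (x : ℂ) ≠ 0 := Complex.ofReal_ne_zero.mpr hx.ne'
  have hW4τ : W4 • τ = ⟨Complex.I * (1 / x / 2 : ℝ), by simpa using hx⟩ := by
    ext
    rw [coe_W4_smul]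
    change -1 / (4 * (Complex.I * (x / 2 : ℝ))) = Complex.I * (1 / x / 2 : ℝ)
    push_cast
    field_simp
    rw [Complex.I_sq]
    norm_num
  have h2τ : 2 * (τ : ℂ) = Complex.I * x := by
    change 2 * (Complex.I * (x / 2 : ℝ)) = Complex.I * x
    push_cast; ring
  rw [valIHalf, valIHalf, valI_of_pos f (by positivity), valI_of_pos f (by positivity), ← hW4τ,
    apply_W4_smul hW, h2τ, mul_zpow, Real.rpow_intCast, smul_eq_mul, Complex.ofReal_zpow]
  ring

lemma continuousOn_valI {f : ℍ → ℂ} (hf : Continuous f) : ContinuousOn (valI f) (Set.Ioi 0) := by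
  rw [continuousOn_iff_continuous_domRestrict]
  have : (Set.Ioi 0).domRestrict (valI f) =
      fun y : Set.Ioi (0 : ℝ) => f ⟨Complex.I * y, by simpa using Set.mem_Ioi.mp y.2⟩ :=
    funext fun y => valI_of_pos f y.2
  rw [this]
  exact hf.comp (Continuous.upperHalfPlaneMk (by fun_prop) _)

lemma continuousOn_valIHalf {f : ℍ → ℂ} (hf : Continuous f) :
    ContinuousOn (valIHalf f) (Set.Ioi 0) :=
  (continuousOn_valI hf).comp (by fun_prop) fun _ ht => half_pos (Set.mem_Ioi.mp ht)

lemma locallyIntegrableOn_valIHalf {f : ℍ → ℂ} (hf : Continuous f) :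
    MeasureTheory.LocallyIntegrableOn (valIHalf f) (Set.Ioi 0) :=
  (continuousOn_valIHalf hf).locallyIntegrableOn measurableSet_Ioi

lemma valI_isBigO_atTop {f : ℍ → ℂ} {c : ℝ}
    (hf : f =O[atImInfty] fun τ => Real.exp (-c * τ.im)) :
    valI f =O[atTop] fun y => Real.exp (-c * y) := by
  obtain ⟨C, hC⟩ := hf.bound
  obtain ⟨A, hA⟩ := (atImInfty_mem _).mp hC
  refine IsBigO.of_bound C ?_
  filter_upwards [eventually_ge_atTop A, eventually_gt_atTop 0] with y hyA hy
  have him : (⟨Complex.I * y, by simpa using hy⟩ : ℍ).im = y := by simp [UpperHalfPlane.im]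
  have h := hA _ (him.symm ▸ hyA)
  rwa [Set.mem_ofPred_eq, him, ← valI_of_pos f hy] at h

lemma valIHalf_isBigO_rpow {f : ℍ → ℂ} {c : ℝ} (hc : 0 < c)
    (hf : f =O[atImInfty] fun τ => Real.exp (-c * τ.im)) (r : ℝ) :
    valIHalf f =O[atTop] (· ^ r) := by
  have h := (valI_isBigO_atTop hf).comp_tendsto (tendsto_id.atTop_div_const two_pos)
  refine h.trans (IsLittleO.isBigO ?_)
  simpa [Function.comp_def, mul_div_assoc', neg_div, div_mul_eq_mul_div] using
    isLittleO_exp_neg_mul_rpow_atTop (half_pos hc) r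

lemma CuspForm.valIHalf_isBigO_rpow {N : ℕ} {k : ℤ} (g : CuspForm (Gamma0 N) k) (r : ℝ) :
    valIHalf g =O[atTop] (· ^ r) :=
  _root_.valIHalf_isBigO_rpow Real.two_pi_pos
    (by simpa [neg_mul] using CuspFormClass.exp_decay_atImInfty g one_pos (by simp)) r

def valIHalfFEPair {k : ℤ} (hk : 0 < k) (g : CuspForm (Gamma0 4) k) (hW : wtSlash k W4 ⇑g = -⇑g) :
    WeakFEPair ℂ where
  f := valIHalf g
  g := valIHalf g
  k := k
  ε := -(Complex.I ^ k)
  f₀ := 0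
  g₀ := 0
  hf_int := locallyIntegrableOn_valIHalf (ModularFormClass.holo g).continuous
  hg_int := locallyIntegrableOn_valIHalf (ModularFormClass.holo g).continuous
  hk := by exact_mod_cast hk
  hε := neg_ne_zero.mpr (zpow_ne_zero _ Complex.I_ne_zero)
  h_feq _ hx := valIHalf_one_div hW hx
  hf_top r := by simpa only [sub_zero] using g.valIHalf_isBigO_rpow r
  hg_top r := by simpa only [sub_zero] using g.valIHalf_isBigO_rpow r

lemma valIHalf_eq_comp_mul_left (f : ℍ → ℂ) : valIHalf f = fun t => valI f (2⁻¹ * t) :=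
  funext fun t => congrArg (valI f) (div_eq_inv_mul t 2)

lemma mellinConvergent_valI_iff (f : ℍ → ℂ) (s : ℂ) :
    MellinConvergent (valI f) s ↔ MellinConvergent (valIHalf f) s := by
  rw [valIHalf_eq_comp_mul_left, MellinConvergent.comp_mul_left (by norm_num)]

lemma completedL_eq_mellin (f : ℍ → ℂ) (s : ℂ) : completedL f s = mellin (valIHalf f) s := by
  rw [valIHalf_eq_comp_mul_left, mellin_comp_mul_left _ _ (by norm_num), completedL, mellin,
    smul_eq_mul, Complex.ofReal_inv, Complex.inv_cpow _ _ (by simp [eq_comm, Real.pi_ne_zero]),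
    Complex.cpow_neg, inv_inv]
  simp_rw [smul_eq_mul, mul_comm]
  norm_num

theorem completedL_functional_equation_general (k : ℤ) (hk : 0 < k)
    (g : CuspForm (Gamma0 4) k) (hW : wtSlash k W4 ⇑g = -⇑g) :
    (∀ s : ℂ, MeasureTheory.IntegrableOn
        (fun y : ℝ => valI (⇑g) y * (y : ℂ) ^ (s - 1)) (Set.Ioi 0)) ∧
      (∀ s : ℂ, completedL (⇑g) s = -(Complex.I ^ k) * completedL (⇑g) ((k : ℂ) - s)) := by
  have hP : IsStrongFEPair (valIHalfFEPair hk g hW) := ⟨rfl, rfl⟩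
  refine ⟨fun s => ?_, fun s => ?_⟩
  · have := (mellinConvergent_valI_iff g s).mpr (hP.hasMellin s).1
    simpa only [MellinConvergent, smul_eq_mul, mul_comm] using this
  · have h := (valIHalfFEPair hk g hW).functional_equation (k - s)
    rw [hP.Λ_eq, hP.symm_Λ_eq] at h
    simpa [valIHalfFEPair, completedL_eq_mellin] using h

/-- if `g` is a cusp form of even positive weight `k` for `Γ₀(4)` with
`g∣[k]W₄ = -g`, then for every `s ∈ ℂ` the function `y ↦ g(iy)·y^{s-1}` is integrable on
`(0,∞)`, and the completed L-function `Λ(s) = 2^s ∫₀^∞ g(iy) y^{s-1} dy` satisfies the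
functional equation `Λ(s) = -i^k Λ(k-s)`. -/
theorem completedL_functional_equation (k : ℤ) (hk : 0 < k) (hke : Even k)
    (g : CuspForm (Gamma0 4) k) (hW : wtSlash k W4 ⇑g = -⇑g) :
    (∀ s : ℂ, MeasureTheory.IntegrableOn
        (fun y : ℝ => valI (⇑g) y * (y : ℂ) ^ (s - 1)) (Set.Ioi 0)) ∧
      (∀ s : ℂ, completedL (⇑g) s = -(Complex.I ^ k) * completedL (⇑g) ((k : ℂ) - s)) :=
  completedL_functional_equation_general k hk g hW

end
end
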